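/- arXiv:2106.14629 — 2 statements merged into one kernel-verified Lean document; each statement's English description precedes it below -/
import Mathlib

section
/- Let k, b₀, b₁, b₂ be real constants with k ≠ 0, and set P(t) := b₀ + b₁t + b₂t², assumed positive for all t in an open interval J. Let q : J → EuclideanSpace ℝ (Fin 3) be twice differentiable with r(t) := ‖q(t)‖ > 0 on J, satisfying q''(t) = −ω(t)·r(t)^(−3)·q(t) with ω(t) = k/√(P(t)). Then the quantity E₃(t) := P(t)·[ ‖q'(t)‖²/2 − k/(r(t)·√(P(t))) ] − ((b₁ + 2b₂t)/2)·⟨q(t), q'(t)⟩ + (b₂/2)·r(t)² is constant on J. -/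
/-!
Along a solution, write `P · k / (r √P) = k √P / r`. Differentiating, the force term
`P ⟨q', q''⟩ = -k √P ⟨q, q'⟩ / r³` cancels the derivative of `k √P / r` in `r`, and what is left,
`P' (‖q'‖² / 2 - k / (2 r √P))`, cancels the `⟨q', q'⟩ + ⟨q, q''⟩` part of the derivative of
`(P' / 2) ⟨q, q'⟩`; its remaining part `(P'' / 2) ⟨q, q'⟩ = b₂ ⟨q, q'⟩` is the derivative of
`b₂ r² / 2`.
-/

open scoped RealInnerProductSpace

variable {F : Type*} [NormedAddCommGroup F] [InnerProductSpace ℝ F]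

theorem HasDerivAt.norm {f : ℝ → F} {f' : F} {x : ℝ} (hf : HasDerivAt f f' x)
    (h0 : f x ≠ 0) : HasDerivAt (‖f ·‖) (⟪f x, f'⟫ / ‖f x‖) x := by
  have h := hf.norm_sq.sqrt (by positivity)
  simp only [Real.sqrt_sq (norm_nonneg _)] at h
  convert h using 1
  field_simp

theorem inner_kepler_force (ω : ℝ) (x y : F) :
    ⟪y, (-(ω * ‖x‖ ^ (-3 : ℝ))) • x⟫ = -(ω * ⟪x, y⟫ / ‖x‖ ^ 3) := by
  rw [inner_smul_right, real_inner_comm, Real.rpow_neg (norm_nonneg x)]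
  norm_cast
  ring

noncomputable def keplerE3 (k b₁ b₂ : ℝ) (P : ℝ → ℝ) (q q' : ℝ → F) (t : ℝ) : ℝ :=
  P t * (‖q' t‖ ^ 2 / 2 - k / (‖q t‖ * Real.sqrt (P t)))
    - (b₁ + 2 * b₂ * t) / 2 * ⟪q t, q' t⟫ + b₂ / 2 * ‖q t‖ ^ 2

theorem hasDerivAt_keplerE3 {k b₁ b₂ t : ℝ} {P : ℝ → ℝ} {q q' q'' : ℝ → F}
    (hP : HasDerivAt P (b₁ + 2 * b₂ * t) t) (hPt : 0 < P t)
    (hq : HasDerivAt q (q' t) t) (hq' : HasDerivAt q' (q'' t) t) (hr : q t ≠ 0)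
    (heom : q'' t = (-(k / Real.sqrt (P t) * ‖q t‖ ^ (-3 : ℝ))) • q t) :
    HasDerivAt (keplerE3 k b₁ b₂ P q q') 0 t := by
  have hsP : 0 < Real.sqrt (P t) := Real.sqrt_pos.2 hPt
  have hrt : 0 < ‖q t‖ := norm_pos_iff.2 hr
  have hcoef : HasDerivAt (fun s => (b₁ + 2 * b₂ * s) / 2) b₂ t := by
    simpa using (((hasDerivAt_id t).const_mul (2 * b₂)).const_add b₁).div_const 2
  have hrsP := ((hq.norm hr).mul (hP.sqrt hPt.ne')).inv (mul_pos hrt hsP).ne'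
  have henergy := hP.mul ((hq'.norm_sq.div_const 2).sub (hrsP.const_mul k))
  have hvirial := hcoef.mul (hq.inner ℝ hq')
  refine ((henergy.sub hvirial).add (hq.norm_sq.const_mul (b₂ / 2))).congr_deriv ?_
  simp only [Pi.mul_apply, Pi.sub_apply, Pi.inv_apply]
  rw [heom, inner_kepler_force, inner_kepler_force, real_inner_self_eq_norm_sq,
    real_inner_self_eq_norm_sq, real_inner_comm (q' t)]
  -- with `P t` written as `√(P t) ^ 2`, `field_simp` clears every root
  have hsq : P t = Real.sqrt (P t) ^ 2 := (Real.sq_sqrt hPt.le).symm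
  set s := Real.sqrt (P t)
  rw [hsq]
  field_simp
  ring

theorem E3_first_integral_general (k b₀ b₁ b₂ : ℝ)
    (P : ℝ → ℝ) (hP : ∀ t, P t = b₀ + b₁ * t + b₂ * t ^ 2) (a b : ℝ)
    (hPpos : ∀ t ∈ Set.Ioo a b, 0 < P t)
    (q q' q'' : ℝ → EuclideanSpace ℝ (Fin 3))
    (hq : ∀ t ∈ Set.Ioo a b, HasDerivAt q (q' t) t)
    (hq' : ∀ t ∈ Set.Ioo a b, HasDerivAt q' (q'' t) t)
    (hr : ∀ t ∈ Set.Ioo a b, 0 < ‖q t‖)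
    (heom : ∀ t ∈ Set.Ioo a b,
      q'' t = (-(k / Real.sqrt (P t) * ‖q t‖ ^ (-3 : ℝ))) • q t) :
    ∀ t₁ ∈ Set.Ioo a b, ∀ t₂ ∈ Set.Ioo a b,
      P t₁ * (‖q' t₁‖ ^ 2 / 2 - k / (‖q t₁‖ * Real.sqrt (P t₁)))
        - (b₁ + 2 * b₂ * t₁) / 2 * ⟪q t₁, q' t₁⟫ + b₂ / 2 * ‖q t₁‖ ^ 2
      = P t₂ * (‖q' t₂‖ ^ 2 / 2 - k / (‖q t₂‖ * Real.sqrt (P t₂)))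
        - (b₁ + 2 * b₂ * t₂) / 2 * ⟪q t₂, q' t₂⟫ + b₂ / 2 * ‖q t₂‖ ^ 2 := by
  intro t₁ ht₁ t₂ ht₂
  have hP' : ∀ t, HasDerivAt P (b₁ + 2 * b₂ * t) t := by
    intro t
    rw [funext hP]
    refine ((((hasDerivAt_id t).const_mul b₁).const_add b₀).add
      ((hasDerivAt_pow 2 t).const_mul b₂)).congr_deriv ?_
    norm_num
    ring
  have hE3 : ∀ t ∈ Set.Ioo a b, HasDerivAt (keplerE3 k b₁ b₂ P q q') 0 t := fun t ht =>
    hasDerivAt_keplerE3 (hP' t) (hPpos t ht) (hq t ht) (hq' t ht) (norm_pos_iff.1 (hr t ht))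
      (heom t ht)
  exact isOpen_Ioo.is_const_of_deriv_eq_zero isPreconnected_Ioo
    (fun t ht => (hE3 t ht).differentiableAt.differentiableWithinAt)
    (fun t ht => (hE3 t ht).deriv) ht₁ ht₂

/-- For the time-dependent Kepler potential with `ω(t) = k/√(b₀ + b₁ t + b₂ t²)`,
the quantity `E₃` is a first integral on the open interval `J = (a, b)`. -/
theorem E3_first_integral (k b₀ b₁ b₂ : ℝ) (hk : k ≠ 0)
    (P : ℝ → ℝ) (hP : ∀ t, P t = b₀ + b₁ * t + b₂ * t ^ 2) (a b : ℝ)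
    (hPpos : ∀ t ∈ Set.Ioo a b, 0 < P t)
    (q q' q'' : ℝ → EuclideanSpace ℝ (Fin 3))
    (hq : ∀ t ∈ Set.Ioo a b, HasDerivAt q (q' t) t)
    (hq' : ∀ t ∈ Set.Ioo a b, HasDerivAt q' (q'' t) t)
    (hr : ∀ t ∈ Set.Ioo a b, 0 < ‖q t‖)
    (heom : ∀ t ∈ Set.Ioo a b,
      q'' t = (-(k / Real.sqrt (P t) * ‖q t‖ ^ (-3 : ℝ))) • q t) :
    ∀ t₁ ∈ Set.Ioo a b, ∀ t₂ ∈ Set.Ioo a b,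
      P t₁ * (‖q' t₁‖ ^ 2 / 2 - k / (‖q t₁‖ * Real.sqrt (P t₁)))
        - (b₁ + 2 * b₂ * t₁) / 2 * ⟪q t₁, q' t₁⟫ + b₂ / 2 * ‖q t₁‖ ^ 2
      = P t₂ * (‖q' t₂‖ ^ 2 / 2 - k / (‖q t₂‖ * Real.sqrt (P t₂)))
        - (b₁ + 2 * b₂ * t₂) / 2 * ⟪q t₂, q' t₂⟫ + b₂ / 2 * ‖q t₂‖ ^ 2 :=
  E3_first_integral_general k b₀ b₁ b₂ P hP a b hPpos q q' q'' hq hq' hr heom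
end

section
/- Let μ ≠ −1 be a real constant, c₁, c₂, c₃ real constants, and set P(s) := c₁ + c₂s + c₃s², assumed positive for all s in an open interval J. Let x : J → ℝ be twice differentiable with x(s) > 0 on J, satisfying x''(s) = −P(s)^(−(μ+3)/2)·x(s)^μ. Then the quantity I(s) := P(s)·x'(s)² − (c₂ + 2c₃s)·x(s)·x'(s) + (2/(μ+1))·P(s)^(−(μ+1)/2)·x(s)^{μ+1} + c₃·x(s)² is constant on J. -/
/-!
Writing `Q = c₂ + 2 c₃ s` and `A = P^(-(μ+3)/2) x^μ`, the product rule gives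
`I' = (P' - Q) x'² + (x'' + A) (2 P x' - Q x)`, since `(2/(μ+1)) P^(-(μ+1)/2) x^(μ+1)`
differentiates to `A (2 P x' - Q x)`. Both factors `P' - Q` and `x'' + A` vanish, so `I' = 0`
and `I` is constant on the connected interval.
-/

open Set

noncomputable def quadraticFirstIntegral (μ c₂ c₃ : ℝ) (P x x' : ℝ → ℝ) (s : ℝ) : ℝ :=
  P s * x' s ^ 2 - (c₂ + 2 * c₃ * s) * x s * x' s
    + 2 / (μ + 1) * P s ^ (-(μ + 1) / 2) * x s ^ (μ + 1) + c₃ * x s ^ 2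

lemma hasDerivAt_quadratic (c₁ c₂ c₃ s : ℝ) :
    HasDerivAt (fun t => c₁ + c₂ * t + c₃ * t ^ 2) (c₂ + 2 * c₃ * s) s := by
  refine (((hasDerivAt_id s).const_mul c₂).const_add c₁ |>.add
    ((hasDerivAt_pow 2 s).const_mul c₃)).congr_deriv ?_
  simp only [Nat.cast_ofNat]
  ring

lemma HasDerivAt.rpow_mul_rpow_succ {μ P' x' s : ℝ} {P x : ℝ → ℝ}
    (hP : HasDerivAt P P' s) (hx : HasDerivAt x x' s) (hPs : 0 < P s) (hxs : 0 < x s) :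
    HasDerivAt (fun t => P t ^ (-(μ + 1) / 2) * x t ^ (μ + 1))
      (P s ^ (-(μ + 3) / 2) * x s ^ μ * ((μ + 1) * (P s * x' - P' * x s / 2))) s := by
  refine ((hP.rpow_const (p := -(μ + 1) / 2) (Or.inl hPs.ne')).mul
    (hx.rpow_const (p := μ + 1) (Or.inl hxs.ne'))).congr_deriv ?_
  have hP_pow : P s ^ (-(μ + 1) / 2) = P s * P s ^ (-(μ + 3) / 2) := by
    rw [show -(μ + 1) / 2 = 1 + -(μ + 3) / 2 by ring, Real.rpow_add hPs, Real.rpow_one]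
  have hx_pow : x s ^ (μ + 1) = x s * x s ^ μ := by
    rw [Real.rpow_add hxs, Real.rpow_one, mul_comm]
  rw [show -(μ + 1) / 2 - 1 = -(μ + 3) / 2 by ring, add_sub_cancel_right, hP_pow, hx_pow]
  ring

theorem hasDerivAt_quadraticFirstIntegral_zero {μ c₂ c₃ s : ℝ} {P x x' x'' : ℝ → ℝ}
    (hμ : μ ≠ -1) (hPd : HasDerivAt P (c₂ + 2 * c₃ * s) s)
    (hx : HasDerivAt x (x' s) s) (hx' : HasDerivAt x' (x'' s) s) (hPs : 0 < P s) (hxs : 0 < x s)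
    (heom : x'' s = -(P s ^ (-(μ + 3) / 2) * x s ^ μ)) :
    HasDerivAt (quadraticFirstIntegral μ c₂ c₃ P x x') 0 s := by
  have hQ : HasDerivAt (fun t => c₂ + 2 * c₃ * t) (2 * c₃) s :=
    ((hasDerivAt_id s).const_mul (2 * c₃)).const_add c₂ |>.congr_deriv (mul_one _)
  have : μ + 1 ≠ 0 := fun h => hμ (eq_neg_of_add_eq_zero_left h)
  refine ((((hPd.mul (hx'.pow 2)).sub ((hQ.mul hx).mul hx')).add
    ((hPd.rpow_mul_rpow_succ (μ := μ) hx hPs hxs).const_mul (2 / (μ + 1)))).add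
    ((hx.pow 2).const_mul c₃)).congr_deriv ?_ |>.congr_of_eventuallyEq
      (.of_forall fun t => ?_)
  · simp only [Pi.mul_apply, Pi.pow_apply, heom]
    field_simp
    ring
  · simp only [quadraticFirstIntegral, Pi.add_apply, Pi.sub_apply, Pi.mul_apply, Pi.pow_apply]
    ring

/-- The quadratic first integral of `x'' = −(c₁ + c₂ s + c₃ s²)^(−(μ+3)/2) x^μ`,
`μ ≠ −1`, on an open interval where `c₁ + c₂ s + c₃ s² > 0`. -/
theorem nonlinear_QFI (μ : ℝ) (hμ : μ ≠ -1) (c₁ c₂ c₃ : ℝ)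
    (P : ℝ → ℝ) (hP : ∀ s, P s = c₁ + c₂ * s + c₃ * s ^ 2) (a b : ℝ)
    (hPpos : ∀ s ∈ Set.Ioo a b, 0 < P s)
    (x x' x'' : ℝ → ℝ)
    (hx : ∀ s ∈ Set.Ioo a b, HasDerivAt x (x' s) s)
    (hx' : ∀ s ∈ Set.Ioo a b, HasDerivAt x' (x'' s) s)
    (hxpos : ∀ s ∈ Set.Ioo a b, 0 < x s)
    (heom : ∀ s ∈ Set.Ioo a b, x'' s = -(P s ^ (-(μ + 3) / 2) * x s ^ μ)) :
    ∀ s₁ ∈ Set.Ioo a b, ∀ s₂ ∈ Set.Ioo a b,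
      P s₁ * (x' s₁) ^ 2 - (c₂ + 2 * c₃ * s₁) * x s₁ * x' s₁
        + (2 / (μ + 1)) * P s₁ ^ (-(μ + 1) / 2) * x s₁ ^ (μ + 1) + c₃ * (x s₁) ^ 2
      = P s₂ * (x' s₂) ^ 2 - (c₂ + 2 * c₃ * s₂) * x s₂ * x' s₂
        + (2 / (μ + 1)) * P s₂ ^ (-(μ + 1) / 2) * x s₂ ^ (μ + 1) + c₃ * (x s₂) ^ 2 := by
  intro s₁ hs₁ s₂ hs₂
  have hPd : ∀ s, HasDerivAt P (c₂ + 2 * c₃ * s) s := by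
    rw [show P = _ from funext hP]
    exact hasDerivAt_quadratic c₁ c₂ c₃
  have hI : ∀ s ∈ Ioo a b, HasDerivAt (quadraticFirstIntegral μ c₂ c₃ P x x') 0 s :=
    fun s hs => hasDerivAt_quadraticFirstIntegral_zero hμ (hPd s) (hx s hs) (hx' s hs)
      (hPpos s hs) (hxpos s hs) (heom s hs)
  exact isOpen_Ioo.is_const_of_deriv_eq_zero isPreconnected_Ioo
    (fun s hs => (hI s hs).differentiableAt.differentiableWithinAt) (fun s hs => (hI s hs).deriv)
    hs₁ hs₂
end
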